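/- For the triangle K_3 (the complete graph on 3 vertices), m(K_3) = 4, while for every cycle C_n on n > 3 vertices, m(C_n) = 2. -/

import Mathlib

open SimpleGraph

/-- A collection `𝒢` of spanning subgraphs of `H` is a *connectivity code* for `H` if the
symmetric difference of any two distinct members of `𝒢` is a connected (spanning) subgraph
of `H`. -/
def IsConnCode {V : Type*} (H : SimpleGraph V) (𝒢 : Set (SimpleGraph V)) : Prop :=
  (∀ G ∈ 𝒢, G ≤ H) ∧
    ∀ G₁ ∈ 𝒢, ∀ G₂ ∈ 𝒢, G₁ ≠ G₂ → (symmDiff G₁ G₂).Connected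

/-- `mCode H` is the maximum possible cardinality of a connectivity code for `H`. -/
noncomputable def mCode {V : Type*} [Fintype V] (H : SimpleGraph V) : ℕ :=
  sSup {n : ℕ | ∃ 𝒢 : Set (SimpleGraph V), IsConnCode H 𝒢 ∧ 𝒢.ncard = n}

/-- The set of edges of `H` with one endpoint in `W` and the other in its complement. -/
def cutEdgeSet {V : Type*} (H : SimpleGraph V) (W : Set V) : Set (Sym2 V) :=
  {e | e ∈ H.edgeSet ∧ ∃ x ∈ W, ∃ y ∈ Wᶜ, e = s(x, y)}

/-- The edge-connectivity of `H`: the minimum number of edges whose deletion disconnects `H`. -/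
noncomputable def edgeConn {V : Type*} [Fintype V] (H : SimpleGraph V) : ℕ :=
  sInf {n : ℕ | ∃ F : Set (Sym2 V), F ⊆ H.edgeSet ∧ F.ncard = n ∧
    ¬(H.deleteEdges F).Connected}

/-!
A vertex `v` with `d` neighbours in `H` sees at most `2 ^ d` different traces of the members of
a code, and two members with the same trace at `v` differ by a graph in which `v` is isolated.
In `K₃` this gives at most `4` members, attained by `⊥` together with the three stars.

If `G₁, G₂, G₃` lie in a code on `n` vertices, then `G₂ ∆ G₃ = (G₁ ∆ G₂) ∆ (G₁ ∆ G₃)`. The two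
connected graphs `G₁ ∆ G₂` and `G₁ ∆ G₃` have at least `n - 1` edges each, all in `H`, so their
symmetric difference has at most `2 (|E(H)| - n + 1)` edges, which is less than `n - 1` as soon
as `2 |E(H)| + 3 < 3 n`. A cycle on `n > 3` vertices has `n` edges, so its codes have at most two
members, and `{⊥, C_n}` is one.
-/

open scoped symmDiff

lemma Set.ncard_symmDiff_add_ncard_add_ncard_le {α : Type*} {X Y E : Set α} (hE : E.Finite)
    (hX : X ⊆ E) (hY : Y ⊆ E) : (X ∆ Y).ncard + X.ncard + Y.ncard ≤ 2 * E.ncard := by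
  have hXY : (X \ Y).ncard + Y.ncard ≤ E.ncard := by
    rw [Set.ncard_sdiff_add_ncard _ _ (hE.subset hX) (hE.subset hY)]
    exact Set.ncard_le_ncard (Set.union_subset hX hY) hE
  have hYX : (Y \ X).ncard + X.ncard ≤ E.ncard := by
    rw [Set.ncard_sdiff_add_ncard _ _ (hE.subset hY) (hE.subset hX)]
    exact Set.ncard_le_ncard (Set.union_subset hY hX) hE
  have := Set.ncard_union_le (X \ Y) (Y \ X)
  rw [Set.symmDiff_def]
  omega

namespace SimpleGraph

variable {V : Type*}

lemma symmDiff_adj (G₁ G₂ : SimpleGraph V) {v w : V} :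
    (G₁ ∆ G₂).Adj v w ↔ Xor (G₁.Adj v w) (G₂.Adj v w) := Iff.rfl

lemma edgeSet_symmDiff (G₁ G₂ : SimpleGraph V) :
    (G₁ ∆ G₂).edgeSet = G₁.edgeSet ∆ G₂.edgeSet := by
  rw [symmDiff_def, symmDiff_def, edgeSet_sup, edgeSet_sdiff, edgeSet_sdiff]
  rfl

lemma ncard_edgeSet_symmDiff_add_le [Finite V] {X Y H : SimpleGraph V} (hX : X ≤ H)
    (hY : Y ≤ H) :
    (X ∆ Y).edgeSet.ncard + X.edgeSet.ncard + Y.edgeSet.ncard ≤ 2 * H.edgeSet.ncard := by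
  rw [edgeSet_symmDiff]
  exact Set.ncard_symmDiff_add_ncard_add_ncard_le (Set.toFinite _) (edgeSet_mono hX)
    (edgeSet_mono hY)

lemma starGraph_injective (hV : 3 ≤ ENat.card V) : Function.Injective (starGraph : V → _) := by
  intro a b hab
  by_contra hne
  obtain ⟨c, hca, hcb⟩ := ENat.exists_ne_ne_of_three_le hV a b
  have := starGraph_center_adj (r := a) hca.symm
  rw [hab, starGraph_adj] at this
  grind

lemma symmDiff_starGraph_adj_of_ne {a b x : V} (hab : a ≠ b) (hxa : x ≠ a) (hxb : x ≠ b) :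
    (starGraph a ∆ starGraph b).Adj a x := by
  simp only [symmDiff_adj, Xor, starGraph_adj]
  grind

lemma connected_starGraph_symmDiff_starGraph (hV : 3 ≤ ENat.card V) {a b : V} (hab : a ≠ b) :
    (starGraph a ∆ starGraph b).Connected := by
  obtain ⟨c, hca, hcb⟩ := ENat.exists_ne_ne_of_three_le hV a b
  have hac := symmDiff_starGraph_adj_of_ne hab hca hcb
  have hbc : (starGraph a ∆ starGraph b).Adj b c := by
    rw [symmDiff_comm]; exact symmDiff_starGraph_adj_of_ne hab.symm hcb hca
  refine (connected_iff_exists_forall_reachable _).2 ⟨a, fun x => ?_⟩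
  rcases eq_or_ne x a with rfl | hxa
  · rfl
  rcases eq_or_ne x b with rfl | hxb
  · exact hac.reachable.trans hbc.symm.reachable
  · exact (symmDiff_starGraph_adj_of_ne hab hxa hxb).reachable

lemma ncard_edgeSet_cycleGraph (n : ℕ) : (cycleGraph (n + 3)).edgeSet.ncard = n + 3 := by
  classical
  have hsum := (cycleGraph (n + 3)).sum_degrees_eq_twice_card_edges
  simp only [cycleGraph_degree_three_le, Finset.sum_const, Finset.card_univ, Fintype.card_fin,
    smul_eq_mul] at hsum
  rw [Set.ncard_eq_toFinset_card', Set.toFinset_card, ← edgeFinset_card]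
  omega

end SimpleGraph

namespace IsConnCode

variable {V : Type*} {H : SimpleGraph V} {𝒢 : Set (SimpleGraph V)} {G₁ G₂ : SimpleGraph V}

lemma symmDiff_le (h : IsConnCode H 𝒢) (hG₁ : G₁ ∈ 𝒢) (hG₂ : G₂ ∈ 𝒢) : G₁ ∆ G₂ ≤ H :=
  symmDiff_le_sup.trans (sup_le (h.1 G₁ hG₁) (h.1 G₂ hG₂))

lemma card_le_ncard_edgeSet_symmDiff_add_one (h : IsConnCode H 𝒢) (hG₁ : G₁ ∈ 𝒢)
    (hG₂ : G₂ ∈ 𝒢) (hne : G₁ ≠ G₂) : Nat.card V ≤ (G₁ ∆ G₂).edgeSet.ncard + 1 :=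
  (h.2 G₁ hG₁ G₂ hG₂ hne).card_vert_le_card_edgeSet_add_one

lemma ncard_le_two_pow_ncard_neighborSet [Finite V] [Nontrivial V] (h : IsConnCode H 𝒢)
    (v : V) : 𝒢.ncard ≤ 2 ^ (H.neighborSet v).ncard := by
  rw [← Set.ncard_powerset]
  refine Set.ncard_le_ncard_of_injOn (fun G => G.neighborSet v)
    (fun G hG => neighborSet_mono (h.1 G hG) v) fun G₁ hG₁ G₂ hG₂ hN => ?_
  by_contra hne
  obtain ⟨w, hw⟩ := (h.2 G₁ hG₁ G₂ hG₂ hne).preconnected.exists_adj_of_nontrivial v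
  have : G₁.Adj v w ↔ G₂.Adj v w := Set.ext_iff.1 hN w
  rw [symmDiff_adj, Xor] at hw
  tauto

lemma ncard_le_two [Finite V] (h : IsConnCode H 𝒢)
    (hH : 2 * H.edgeSet.ncard + 3 < 3 * Nat.card V) : 𝒢.ncard ≤ 2 := by
  by_contra! h3
  obtain ⟨a, ha, b, hb, c, hc, hab, hac, hbc⟩ := (Set.two_lt_ncard).1 h3
  have hX := h.card_le_ncard_edgeSet_symmDiff_add_one ha hb hab
  have hY := h.card_le_ncard_edgeSet_symmDiff_add_one ha hc hac
  have hZ := h.card_le_ncard_edgeSet_symmDiff_add_one hb hc hbc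
  have hsum := ncard_edgeSet_symmDiff_add_le (h.symmDiff_le ha hb) (h.symmDiff_le ha hc)
  rw [symmDiff_symmDiff_symmDiff_comm, symmDiff_self, bot_symmDiff] at hsum
  omega

end IsConnCode

section

variable {V : Type*}

lemma isConnCode_pair_bot {H : SimpleGraph V} (hH : H.Connected) :
    IsConnCode H {⊥, H} := by
  refine ⟨by rintro G (rfl | rfl) <;> simp, ?_⟩
  rintro G₁ (rfl | rfl) G₂ (rfl | rfl) hne <;>
    first | exact absurd rfl hne | simpa only [bot_symmDiff, symmDiff_bot]

lemma isConnCode_top_insert_bot_range_starGraph (hV : 3 ≤ ENat.card V) :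
    IsConnCode ⊤ (insert ⊥ (Set.range starGraph) : Set (SimpleGraph V)) := by
  refine ⟨fun _ _ => le_top, ?_⟩
  rintro G₁ (rfl | ⟨a, rfl⟩) G₂ (rfl | ⟨b, rfl⟩) hne
  · exact absurd rfl hne
  · simpa only [bot_symmDiff] using connected_starGraph b
  · simpa only [symmDiff_bot] using connected_starGraph a
  · exact connected_starGraph_symmDiff_starGraph hV fun hab => hne (hab ▸ rfl)

lemma ncard_insert_bot_range_starGraph [Finite V] (hV : 3 ≤ ENat.card V) :
    (insert ⊥ (Set.range starGraph) : Set (SimpleGraph V)).ncard = Nat.card V + 1 := by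
  have hbot : (⊥ : SimpleGraph V) ∉ Set.range starGraph := by
    rintro ⟨a, ha⟩
    obtain ⟨c, hca, -⟩ := ENat.exists_ne_ne_of_three_le hV a a
    simpa [ha] using starGraph_center_adj (r := a) hca.symm
  rw [Set.ncard_insert_of_notMem hbot, Set.ncard_range_of_injective (starGraph_injective hV)]

lemma mCode_eq_of_isConnCode [Fintype V] {H : SimpleGraph V}
    {𝒢 : Set (SimpleGraph V)} {k : ℕ} (h : IsConnCode H 𝒢) (hk : 𝒢.ncard = k)
    (hmax : ∀ 𝒢', IsConnCode H 𝒢' → 𝒢'.ncard ≤ k) : mCode H = k :=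
  le_antisymm (csSup_le ⟨k, 𝒢, h, hk⟩ (by rintro _ ⟨𝒢', h', rfl⟩; exact hmax 𝒢' h'))
    (le_csSup ⟨k, by rintro _ ⟨𝒢', h', rfl⟩; exact hmax 𝒢' h'⟩ ⟨𝒢, h, hk⟩)

end

/-- `m(K₃) = 4`, while `m(C_n) = 2` for every cycle on `n > 3` vertices. -/
theorem stmt13 :
    mCode (⊤ : SimpleGraph (Fin 3)) = 4 ∧
    ∀ n : ℕ, 3 < n → mCode (cycleGraph n) = 2 := by
  refine ⟨?_, fun n hn => ?_⟩
  · have hV : 3 ≤ ENat.card (Fin 3) := by simp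
    have hdeg : ((⊤ : SimpleGraph (Fin 3)).neighborSet 0).ncard = 2 := by
      rw [neighborSet_top, Set.ncard_eq_toFinset_card']; rfl
    refine mCode_eq_of_isConnCode (isConnCode_top_insert_bot_range_starGraph hV)
      (by rw [ncard_insert_bot_range_starGraph hV, Nat.card_fin]) fun 𝒢 h𝒢 => ?_
    exact (h𝒢.ncard_le_two_pow_ncard_neighborSet 0).trans_eq (by rw [hdeg]; rfl)
  · obtain ⟨m, rfl⟩ : ∃ m, n = m + 4 := ⟨n - 4, by omega⟩
    have hE : (cycleGraph (m + 4)).edgeSet.ncard = m + 4 := ncard_edgeSet_cycleGraph (m + 1)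
    have hne : (⊥ : SimpleGraph (Fin (m + 4))) ≠ cycleGraph (m + 4) := fun h =>
      not_connected_bot (h ▸ cycleGraph_connected)
    refine mCode_eq_of_isConnCode (isConnCode_pair_bot cycleGraph_connected)
      (Set.ncard_pair hne) fun 𝒢 h𝒢 => h𝒢.ncard_le_two ?_
    rw [hE, Nat.card_fin]
    omega
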